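/- arXiv:1409.1999 — 3 statements merged into one kernel-verified Lean document; each statement's English description precedes it below -/
import Mathlib

section
/- Let A ∈ ℝ^{m×n} have full row rank m, b ∈ ℝ^m be nonzero, and let L index a basis (A_L invertible). Set k = ‖Aᵀ(AAᵀ)⁻¹ b‖₂ / (m + n²) and d = A_L⁻¹ b / k − ⌈A_L⁻¹ b / k⌉. Then any x ∈ ℝ^n satisfying A x = A_L ⌈A_L⁻¹ b / k⌉ and ‖d‖₂ ≤ m satisfies ‖x‖₂ ≥ n² + m − ‖d‖₂ ≥ n², and consequently ‖x‖∞ > n provided ‖d‖₂ < m. -/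
open Matrix

/-- Euclidean norm of a finite real vector. -/
noncomputable def norm2 {ι : Type*} [Fintype ι] (x : ι → ℝ) : ℝ :=
  Real.sqrt (∑ i, (x i) ^ 2)

/-- Sup norm of a finite real vector. -/
noncomputable def normInf {ι : Type*} [Fintype ι] (x : ι → ℝ) : ℝ :=
  ⨆ i, |x i|

lemma norm2_eq {ι : Type*} [Fintype ι] (x : ι → ℝ) :
    norm2 x = ‖(WithLp.equiv 2 (ι → ℝ)).symm x‖ := by
  rw [EuclideanSpace.norm_eq]; simp [norm2, sq_abs]

lemma norm2_nonneg {ι : Type*} [Fintype ι] (x : ι → ℝ) : 0 ≤ norm2 x :=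
  Real.sqrt_nonneg _

lemma norm2_pos {ι : Type*} [Fintype ι] (x : ι → ℝ) (hx : x ≠ 0) : 0 < norm2 x := by
  rw [norm2_eq, norm_pos_iff]
  intro h
  apply hx
  have := congrArg (WithLp.equiv 2 (ι → ℝ)) h
  simpa using this

lemma norm2_smul {ι : Type*} [Fintype ι] (c : ℝ) (x : ι → ℝ) :
    norm2 (c • x) = |c| * norm2 x := by
  rw [norm2_eq, norm2_eq]
  have : (WithLp.equiv 2 (ι → ℝ)).symm (c • x)
      = c • (WithLp.equiv 2 (ι → ℝ)).symm x := rfl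
  rw [this, norm_smul, Real.norm_eq_abs]

lemma norm2_sub_le {ι : Type*} [Fintype ι] (a b : ι → ℝ) :
    norm2 a - norm2 b ≤ norm2 (a - b) := by
  rw [norm2_eq, norm2_eq, norm2_eq]
  have : (WithLp.equiv 2 (ι → ℝ)).symm (a - b)
      = (WithLp.equiv 2 (ι → ℝ)).symm a - (WithLp.equiv 2 (ι → ℝ)).symm b := rfl
  rw [this]
  exact norm_sub_norm_le _ _

lemma sum_mul_le_norm2 {ι : Type*} [Fintype ι] (u y : ι → ℝ) :
    ∑ i, u i * y i ≤ norm2 u * norm2 y := by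
  rw [norm2_eq, norm2_eq]
  have := real_inner_le_norm ((WithLp.equiv 2 (ι → ℝ)).symm u)
    ((WithLp.equiv 2 (ι → ℝ)).symm y)
  simpa [PiLp.inner_apply, RCLike.inner_apply, conj_trivial, mul_comm] using this

lemma proj_norm_le {n : ℕ} (P : Matrix (Fin n) (Fin n) ℝ) (hsym : Pᵀ = P)
    (hP : P * P = P) (y : Fin n → ℝ) : norm2 (P.mulVec y) ≤ norm2 y := by
  have h3 : P.vecMul (P.mulVec y) = P.mulVec y := by
    rw [← hsym, vecMul_transpose, hsym, mulVec_mulVec, hP]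
  have h4 : (P.mulVec y) ⬝ᵥ (P.mulVec y) = (P.mulVec y) ⬝ᵥ y := by
    rw [Matrix.dotProduct_mulVec, h3]
  have key : ∑ i, (P.mulVec y) i ^ 2 = ∑ i, (P.mulVec y) i * y i := by
    simpa [dotProduct, sq] using h4
  have hcs := sum_mul_le_norm2 (P.mulVec y) y
  have hsq : norm2 (P.mulVec y) ^ 2 = ∑ i, (P.mulVec y) i ^ 2 :=
    Real.sq_sqrt (by positivity)
  have hM0 := norm2_nonneg (P.mulVec y)
  have hN0 := norm2_nonneg y
  nlinarith [hM0, hN0, hcs, hsq, key]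

/-- Let `A ∈ ℝ^{m×n}` have full row rank `m`, `b` with `Aᵀ(AAᵀ)⁻¹b ≠ 0`, and `L`
index a basis (`A_L` invertible). With `k = ‖Aᵀ(AAᵀ)⁻¹ b‖₂ / (m + n²)` and
`d = A_L⁻¹ b / k − ⌈A_L⁻¹ b / k⌉`, any `x` satisfying `A x = A_L ⌈A_L⁻¹ b / k⌉`
and `‖d‖₂ ≤ m` satisfies `‖x‖₂ ≥ n² + m − ‖d‖₂ ≥ n²`, and `‖x‖∞ > n` provided
`‖d‖₂ < m`. -/
theorem stmt4 {m n : ℕ} (hn : 0 < n) (A : Matrix (Fin m) (Fin n) ℝ)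
    (hrank : A.rank = m) (hinv : IsUnit (A * Aᵀ).det)
    (b : Fin m → ℝ) (hb : (Aᵀ * (A * Aᵀ)⁻¹).mulVec b ≠ 0)
    (L : Fin m → Fin n) (hL : Function.Injective L)
    (hAL : IsUnit (A.submatrix id L).det)
    (k : ℝ) (hk : k = norm2 ((Aᵀ * (A * Aᵀ)⁻¹).mulVec b) / (m + n ^ 2))
    (d : Fin m → ℝ)
    (hd : ∀ i, d i = ((A.submatrix id L)⁻¹.mulVec b) i / k
                      - ⌈((A.submatrix id L)⁻¹.mulVec b) i / k⌉)
    (x : Fin n → ℝ)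
    (hx : A.mulVec x
        = (A.submatrix id L).mulVec
            (fun i => (⌈((A.submatrix id L)⁻¹.mulVec b) i / k⌉ : ℝ)))
    (hdm : norm2 d ≤ m) :
    norm2 x ≥ (n : ℝ) ^ 2 + m - norm2 d ∧
    (n : ℝ) ^ 2 + m - norm2 d ≥ (n : ℝ) ^ 2 ∧
    (norm2 d < m → normInf x > n) := by
  classical
  have hn' : (0:ℝ) < (n:ℝ) := by exact_mod_cast hn
  have hmn : (0:ℝ) < (m:ℝ) + (n:ℝ) ^ 2 := by positivity
  set AL := A.submatrix id L with hALdef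
  set v := (Aᵀ * (A * Aᵀ)⁻¹).mulVec b with hv
  have hv0 : 0 < norm2 v := norm2_pos v hb
  have hk0 : 0 < k := by rw [hk]; exact div_pos hv0 hmn
  have hkv : norm2 (k⁻¹ • v) = (m:ℝ) + (n:ℝ) ^ 2 := by
    rw [norm2_smul, abs_of_pos (inv_pos.mpr hk0), hk]
    field_simp
  -- the ceiling vector
  set c : Fin m → ℝ := fun i => (⌈(AL⁻¹.mulVec b) i / k⌉ : ℝ) with hc
  have hcd : c = (k⁻¹ • AL⁻¹.mulVec b) - d := by
    funext i
    have := hd i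
    simp only [Pi.sub_apply, Pi.smul_apply, smul_eq_mul, hc]
    rw [this]; ring
  have hALc : AL.mulVec c = k⁻¹ • b - AL.mulVec d := by
    rw [hcd, Matrix.mulVec_sub, Matrix.mulVec_smul, Matrix.mulVec_mulVec,
      Matrix.mul_nonsing_inv _ hAL, Matrix.one_mulVec]
  -- extension of d by zeros
  set w : Fin n → ℝ := fun j => ∑ i, if L i = j then d i else 0 with hwdef
  have hw1 : A.mulVec w = AL.mulVec d := by
    funext r
    simp only [Matrix.mulVec, dotProduct, hwdef, Finset.mul_sum]
    rw [Finset.sum_comm]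
    apply Finset.sum_congr rfl
    intro i _
    simp [mul_ite, Finset.sum_ite_eq, hALdef]
  have hwL : ∀ i, w (L i) = d i := by
    intro i
    show (∑ i' : Fin m, if L i' = L i then d i' else 0) = d i
    rw [Finset.sum_eq_single i]
    · simp
    · intro i' _ hne
      exact if_neg (fun h => hne (hL h))
    · intro h; exact absurd (Finset.mem_univ i) h
  have hw2 : norm2 w = norm2 d := by
    unfold norm2
    congr 1
    calc ∑ j, w j ^ 2
        = ∑ j ∈ Finset.image L Finset.univ, w j ^ 2 := by
          refine (Finset.sum_subset (Finset.subset_univ _) ?_).symm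
          intro j _ hj
          have hwj : w j = 0 := Finset.sum_eq_zero (fun i _ =>
            if_neg (fun h => hj (Finset.mem_image.mpr ⟨i, Finset.mem_univ i, h⟩)))
          simp [hwj]
      _ = ∑ i, w (L i) ^ 2 := Finset.sum_image (fun a _ b _ h => hL h)
      _ = ∑ i, d i ^ 2 := by simp [hwL]
  -- the projection matrix
  set P : Matrix (Fin n) (Fin n) ℝ := Aᵀ * (A * Aᵀ)⁻¹ * A with hP
  have hPsym : Pᵀ = P := by
    rw [hP]
    simp [Matrix.transpose_mul, Matrix.transpose_nonsing_inv, Matrix.mul_assoc]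
  have hPP : P * P = P := by
    have h1 : (A * Aᵀ)⁻¹ * (A * Aᵀ) = 1 := Matrix.nonsing_inv_mul _ hinv
    have h2 : P * P = Aᵀ * (((A * Aᵀ)⁻¹ * (A * Aᵀ)) * ((A * Aᵀ)⁻¹ * A)) := by
      rw [hP]; simp only [Matrix.mul_assoc]
    rw [h2, h1, Matrix.one_mul, hP, Matrix.mul_assoc]
  have hPx : P.mulVec x = k⁻¹ • v - P.mulVec w := by
    have e1 : P.mulVec x = (Aᵀ * (A * Aᵀ)⁻¹).mulVec (A.mulVec x) := by
      rw [Matrix.mulVec_mulVec, hP]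
    rw [e1, hx, hALc, Matrix.mulVec_sub, Matrix.mulVec_smul, ← hw1,
      Matrix.mulVec_mulVec, ← hP, ← hv]
  have h1 : norm2 (P.mulVec x) ≤ norm2 x := proj_norm_le P hPsym hPP x
  have h2 : norm2 (k⁻¹ • v) - norm2 (P.mulVec w) ≤ norm2 (P.mulVec x) := by
    rw [hPx]; exact norm2_sub_le _ _
  have h3 : norm2 (P.mulVec w) ≤ norm2 d := by
    rw [← hw2]; exact proj_norm_le P hPsym hPP w
  rw [hkv] at h2
  have main : norm2 x ≥ (n : ℝ) ^ 2 + m - norm2 d := by linarith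
  refine ⟨main, by linarith, ?_⟩
  intro hlt
  have hnx : (n:ℝ) ^ 2 < norm2 x := by linarith
  have hM : ∀ i, |x i| ≤ normInf x := by
    intro i
    unfold normInf
    exact le_ciSup (f := fun i => |x i|) (Set.Finite.bddAbove (Set.finite_range _)) i
  have hM0 : 0 ≤ normInf x := le_trans (abs_nonneg _) (hM ⟨0, hn⟩)
  have hsum : ∑ i, x i ^ 2 ≤ (n:ℝ) * (normInf x) ^ 2 := by
    calc ∑ i, x i ^ 2 ≤ ∑ _i : Fin n, (normInf x) ^ 2 :=
          Finset.sum_le_sum (fun i _ => by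
            rw [← sq_abs]
            exact pow_le_pow_left₀ (abs_nonneg _) (hM i) 2)
      _ = (n:ℝ) * (normInf x) ^ 2 := by
          simp [Finset.sum_const, Finset.card_univ, nsmul_eq_mul]
  have hle : norm2 x ≤ (n:ℝ) * normInf x := by
    have hsn : Real.sqrt ((n:ℝ)) ≤ (n:ℝ) := by
      have h1n : (1:ℝ) ≤ (n:ℝ) := by exact_mod_cast hn
      have h := Real.sqrt_le_sqrt (show (n:ℝ) ≤ (n:ℝ) ^ 2 by nlinarith [h1n])
      rwa [Real.sqrt_sq hn'.le] at h
    calc norm2 x ≤ Real.sqrt ((n:ℝ) * (normInf x) ^ 2) := Real.sqrt_le_sqrt hsum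
      _ = Real.sqrt (n:ℝ) * normInf x := by
          rw [Real.sqrt_mul (by positivity), Real.sqrt_sq hM0]
      _ ≤ (n:ℝ) * normInf x := mul_le_mul_of_nonneg_right hsn hM0
  nlinarith
end

section
/- Let A ∈ ℝ^{m×n} be totally unimodular with full row rank, b ∈ ℝ^m with y := Aᵀ(AAᵀ)⁻¹b ≠ 0, k := ‖y‖₂/(m + n²), and L a basis of A. Then ‖⌈A_L⁻¹ b / k⌉‖∞ ≤ m·n·(m + n²) + 1. -/
open Matrix

/-!
Put `y = Aᵀ(AAᵀ)⁻¹b`, so that `Ay = b`. All entries of a totally unimodular matrix lie in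
`[-1, 1]`, and so do those of the inverse of any square submatrix: an adjugate entry is a minor and
the determinant is `0` or `±1`. Hence `‖b‖∞ ≤ n‖y‖₂` and
`‖A_L⁻¹ b‖∞ ≤ m‖b‖∞ ≤ m n ‖y‖₂ = m n (m + n²) k`; rounding up adds at most `1`.
-/

lemma SignType.abs_cast_le_one {R : Type*} [CommRing R] [LinearOrder R]
    [IsStrictOrderedRing R] (s : SignType) : |(s : R)| ≤ 1 := by
  cases s <;> simp

namespace Matrix.IsTotallyUnimodular

variable {R : Type*} [CommRing R]

lemma det_mem_range_signType_cast {p : ℕ} {A : Matrix (Fin p) (Fin p) R}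
    (hA : A.IsTotallyUnimodular) : A.det ∈ Set.range (SignType.cast : SignType → R) := by
  simpa using hA p id id Function.injective_id Function.injective_id

variable [LinearOrder R] [IsStrictOrderedRing R]

lemma abs_apply_le_one {ι κ : Type*} {A : Matrix ι κ R} (hA : A.IsTotallyUnimodular)
    (i : ι) (j : κ) : |A i j| ≤ 1 := by
  obtain ⟨s, hs⟩ := hA.apply i j
  exact hs ▸ s.abs_cast_le_one

lemma abs_det_le_one {p : ℕ} {A : Matrix (Fin p) (Fin p) R} (hA : A.IsTotallyUnimodular) :
    |A.det| ≤ 1 := by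
  obtain ⟨s, hs⟩ := hA.det_mem_range_signType_cast
  exact hs ▸ s.abs_cast_le_one

lemma abs_adjugate_apply_le_one {p : ℕ} {A : Matrix (Fin p) (Fin p) R}
    (hA : A.IsTotallyUnimodular) (i j : Fin p) : |A.adjugate i j| ≤ 1 := by
  cases p with
  | zero => exact i.elim0
  | succ q =>
    rw [adjugate_fin_succ_eq_det_submatrix, abs_mul, abs_pow, abs_neg, abs_one, one_pow, one_mul]
    exact (hA.submatrix _ _).abs_det_le_one

-- For singular `A` this holds because `A⁻¹` is then the junk value `0`.
lemma abs_inv_apply_le_one {K : Type*} [Field K] [LinearOrder K] [IsStrictOrderedRing K]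
    {p : ℕ} {A : Matrix (Fin p) (Fin p) K} (hA : A.IsTotallyUnimodular) (i j : Fin p) :
    |A⁻¹ i j| ≤ 1 := by
  obtain ⟨s, hs⟩ := hA.det_mem_range_signType_cast
  have hdet : |A.det⁻¹| ≤ 1 := by rw [← hs]; cases s <;> simp
  rw [inv_def, Ring.inverse_eq_inv', smul_apply, smul_eq_mul, abs_mul]
  exact mul_le_one₀ hdet (abs_nonneg _) (hA.abs_adjugate_apply_le_one i j)

end Matrix.IsTotallyUnimodular

lemma abs_mulVec_apply_le {R ι κ : Type*} [CommRing R] [LinearOrder R] [IsStrictOrderedRing R]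
    [Fintype κ] {M : Matrix ι κ R} {x : κ → R} {c : R} (hM : ∀ i j, |M i j| ≤ 1)
    (hx : ∀ j, |x j| ≤ c) (i : ι) : |(M *ᵥ x) i| ≤ Fintype.card κ * c := by
  calc |∑ j, M i j * x j| ≤ ∑ j, |M i j * x j| := Finset.abs_sum_le_sum_abs _ _
    _ ≤ ∑ _j : κ, c := Finset.sum_le_sum fun j _ => by
      rw [abs_mul]
      exact (mul_le_of_le_one_left (abs_nonneg _) (hM i j)).trans (hx j)
    _ = Fintype.card κ * c := by simp

lemma abs_le_norm2 {ι : Type*} [Fintype ι] (x : ι → ℝ) (i : ι) : |x i| ≤ norm2 x := by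
  rw [← Real.sqrt_sq_eq_abs, norm2]
  exact Real.sqrt_le_sqrt (Finset.single_le_sum (fun j _ => sq_nonneg (x j)) (Finset.mem_univ i))

lemma normInf_le {ι : Type*} [Fintype ι] {x : ι → ℝ} {c : ℝ} (hc : 0 ≤ c)
    (hx : ∀ i, |x i| ≤ c) : normInf x ≤ c := by
  rw [normInf]
  cases isEmpty_or_nonempty ι
  · rwa [Real.iSup_of_isEmpty]
  · exact ciSup_le hx

lemma abs_ceil_le_add_one {R : Type*} [CommRing R] [LinearOrder R] [IsStrictOrderedRing R]
    [FloorRing R] {x c : R} (hx : |x| ≤ c) : |(⌈x⌉ : R)| ≤ c + 1 := by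
  obtain ⟨hlo, hhi⟩ := abs_le.mp hx
  exact abs_le.mpr ⟨by linarith [Int.le_ceil x], by linarith [Int.ceil_lt_add_one x]⟩

theorem stmt8_general {m n : ℕ} (A : Matrix (Fin m) (Fin n) ℝ)
    (hTU : A.IsTotallyUnimodular)
    (hinv : IsUnit (A * Aᵀ).det)
    (b : Fin m → ℝ)
    (L : Fin m → Fin n)
    (k : ℝ) (hk : k = norm2 ((Aᵀ * (A * Aᵀ)⁻¹).mulVec b) / (m + n ^ 2)) :
    normInf (fun i => (⌈((A.submatrix id L)⁻¹.mulVec b) i / k⌉ : ℝ))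
      ≤ m * n * (m + n ^ 2) + 1 := by
  set y := (Aᵀ * (A * Aᵀ)⁻¹) *ᵥ b
  have hAy : A *ᵥ y = b := by
    rw [mulVec_mulVec, ← Matrix.mul_assoc, mul_nonsing_inv _ hinv, one_mulVec]
  have hb : ∀ j, |b j| ≤ n * norm2 y := fun j => by
    simpa [← hAy] using abs_mulVec_apply_le hTU.abs_apply_le_one (abs_le_norm2 y) j
  have hz : ∀ i, |((A.submatrix id L)⁻¹ *ᵥ b) i| ≤ m * (n * norm2 y) := fun i => by
    simpa using abs_mulVec_apply_le (hTU.submatrix id L).abs_inv_apply_le_one hb i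
  refine normInf_le (by positivity) fun i => abs_ceil_le_add_one ?_
  have hmn : (0 : ℝ) < m + n ^ 2 := by have := i.pos; positivity
  have hk0 : 0 ≤ k := hk ▸ div_nonneg (Real.sqrt_nonneg _) hmn.le
  rw [abs_div, abs_of_nonneg hk0]
  refine div_le_of_le_mul₀ hk0 (by positivity) ?_
  calc |((A.submatrix id L)⁻¹ *ᵥ b) i| ≤ m * (n * norm2 y) := hz i
    _ = m * n * (m + n ^ 2) * k := by rw [hk]; field_simp

/-- Let `A ∈ ℝ^{m×n}` be totally unimodular with full row rank, `b` with
`y := Aᵀ(AAᵀ)⁻¹b ≠ 0`, `k := ‖y‖₂/(m + n²)`, and `L` a basis of `A`.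
Then `‖⌈A_L⁻¹ b / k⌉‖∞ ≤ m·n·(m + n²) + 1`. -/
theorem stmt8 {m n : ℕ} (A : Matrix (Fin m) (Fin n) ℝ)
    (hTU : A.IsTotallyUnimodular) (hrank : A.rank = m)
    (hinv : IsUnit (A * Aᵀ).det)
    (b : Fin m → ℝ) (hb : (Aᵀ * (A * Aᵀ)⁻¹).mulVec b ≠ 0)
    (L : Fin m → Fin n) (hL : Function.Injective L)
    (hAL : IsUnit (A.submatrix id L).det)
    (k : ℝ) (hk : k = norm2 ((Aᵀ * (A * Aᵀ)⁻¹).mulVec b) / (m + n ^ 2)) :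
    normInf (fun i => (⌈((A.submatrix id L)⁻¹.mulVec b) i / k⌉ : ℝ))
      ≤ m * n * (m + n ^ 2) + 1 :=
  stmt8_general A hTU hinv b L k hk
end

section
/- Sensitivity theorem (Schrijver 10.5, special TU case): Let à be a totally unimodular p × n matrix, c ∈ ℝ^n, and b'', b* ∈ ℝ^p such that both max{cᵀx : Ãx ≤ b''} and max{cᵀx : Ãx ≤ b*} are finite. Then for each optimal solution x'' of the first problem there exists an optimal solution x* of the second with ‖x'' − x*‖∞ ≤ n ‖b'' − b*‖∞. -/
open Matrix

/-!
Let `x₀` be feasible for `b*` and `ε = ‖b'' - b*‖∞`. Total unimodularity makes the cone of vectors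
`z` for which `Ã z` has the sign pattern of `Ã (x'' - x₀)` generated by `{0, ±1}`-vectors: slicing
it by a hyperplane gives a polytope whose vertices solve a nonsingular TU system with a unit
right-hand side, so Cramer's rule makes them multiples of sign vectors. By Krein–Milman and
Carathéodory, `x'' - x₀ = ∑ λₖ dₖ` with at most `n` such generators `dₖ`. Put
`w = ∑ min(λₖ, ε) dₖ`. On each row the integers `(Ã dₖ)ᵢ` share a sign, so truncating the
coefficients at `ε` either leaves that row unchanged or moves it by at least `ε`; hence `x'' - w` is
feasible for `b*` and `x₀ + w` for `b''`. Optimality of `x''` gives `cᵀ(x'' - w) ≥ cᵀx₀`, and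
`‖w‖∞ ≤ nε`. So every feasible point of the second program is dominated by a point of the compact
set `{Ã x ≤ b*} ∩ B̄(x'', nε)`, and a maximiser of `cᵀx` there is optimal.
-/

open Filter Topology

variable {m n : Type*}

theorem eq_zero_of_mem_extremePoints_of_eventually {E : Type*} [AddCommGroup E] [Module ℝ E]
    {S : Set E} {z w : E} (hz : z ∈ S.extremePoints ℝ) (hw : ∀ᶠ s : ℝ in 𝓝 0, z + s • w ∈ S) :
    w = 0 := by
  obtain ⟨δ, hδ, hball⟩ := Metric.eventually_nhds_iff.1 hw
  have hmem : ∀ s, s = δ / 2 ∨ s = -(δ / 2) → z + s • w ∈ S := by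
    rintro s (rfl | rfl) <;> exact hball (by simp [abs_of_pos hδ]; linarith)
  have hseg : z ∈ openSegment ℝ (z + (δ / 2) • w) (z + (-(δ / 2)) • w) :=
    ⟨1 / 2, 1 / 2, by norm_num, by norm_num, by norm_num, by module⟩
  have hfix := ((mem_extremePoints.1 hz).2 _ (hmem _ (.inl rfl)) _ (hmem _ (.inr rfl)) hseg).1
  rw [add_eq_left, smul_eq_zero] at hfix
  exact hfix.resolve_left (by positivity)

theorem convexHull_extremePoints_eq {E : Type*} [AddCommGroup E] [Module ℝ E]
    [TopologicalSpace E] [T2Space E] [IsTopologicalAddGroup E] [ContinuousSMul ℝ E]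
    [LocallyConvexSpace ℝ E] {S : Set E} (hS : IsCompact S) (hconv : Convex ℝ S)
    (hfin : (S.extremePoints ℝ).Finite) : convexHull ℝ (S.extremePoints ℝ) = S := by
  rw [← (hfin.isClosed_convexHull ℝ).closure_eq, closure_convexHull_extremePoints hS hconv]

theorem AffineIndependent.linearIndependent_of_forall_eq_one {k V ι : Type*} [Field k]
    [AddCommGroup V] [Module k V] {p : ι → V} (hp : AffineIndependent k p) (φ : V →ₗ[k] k)
    (hφ : ∀ i, φ (p i) = 1) : LinearIndependent k p := by
  rw [linearIndependent_iff']
  intro s g hg i hi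
  have hsum : ∑ i ∈ s, g i = 0 := by simpa [map_sum, hφ] using congrArg φ hg
  exact hp s g hsum (by rw [Finset.weightedVSub_eq_linear_combination s hsum, hg]) i hi

namespace Matrix

theorem exists_submatrix_det_ne_zero {K : Type*} [Field K] [Finite m] [Fintype n]
    [DecidableEq n] {A : Matrix m n K} (hA : ∀ v, A *ᵥ v = 0 → v = 0) :
    ∃ f : n → m, (A.submatrix f id).det ≠ 0 := by
  have hspan : Submodule.span K (Set.range A.row) = ⊤ := by
    apply Submodule.eq_top_of_finrank_eq
    rw [← rank_eq_finrank_span_row]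
    exact LinearMap.finrank_range_of_inj (LinearMap.ker_eq_bot.mp (ker_mulVecLin_eq_bot_iff.2 hA))
  obtain ⟨κ, a, -, hspan', hli⟩ := exists_linearIndependent' K A.row
  let e := (Module.Basis.mk hli (by rw [hspan', hspan])).indexEquiv (Pi.basisFun K n)
  refine ⟨a ∘ e.symm, ?_⟩
  have hrows : LinearIndependent K (A.submatrix (a ∘ e.symm) id).row :=
    hli.comp e.symm e.symm.injective
  exact ((isUnit_iff_isUnit_det _).1 (linearIndependent_rows_iff_isUnit.1 hrows)).ne_zero

theorem eventually_mulVec_add_smul_le [Fintype m] [Fintype n] {A : Matrix m n ℝ}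
    {b : m → ℝ} {z w : n → ℝ} (hz : A *ᵥ z ≤ b) (hw : ∀ i, (A *ᵥ z) i = b i → (A *ᵥ w) i = 0) :
    ∀ᶠ s : ℝ in 𝓝 0, A *ᵥ (z + s • w) ≤ b := by
  have hrow : ∀ i, ∀ᶠ s : ℝ in 𝓝 0, (A *ᵥ z) i + s * (A *ᵥ w) i ≤ b i := by
    intro i
    rcases (hz i).eq_or_lt with htight | hslack
    · exact .of_forall fun s => by simp [htight, hw i htight]
    · have hcont : Continuous fun s : ℝ => (A *ᵥ z) i + s * (A *ᵥ w) i := by fun_prop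
      filter_upwards [hcont.continuousAt.eventually_lt continuous_const.continuousAt
        (by simpa using hslack)] with s hs using hs.le
  filter_upwards [eventually_all.2 hrow] with s hs i
  simpa [mulVec_add, mulVec_smul] using hs i

section TotallyUnimodular

variable {R : Type*} [CommRing R]

theorem IsTotallyUnimodular.diagonal_mul [Fintype m] [DecidableEq m] {A : Matrix m n R}
    (hA : A.IsTotallyUnimodular) (s : m → SignType) :
    (diagonal (fun i => (s i : R)) * A).IsTotallyUnimodular := by
  rw [isTotallyUnimodular_iff] at hA ⊢
  intro k f g
  have hsub : (diagonal (fun i => (s i : R)) * A).submatrix f g =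
      of fun i j => (s (f i) : R) * A.submatrix f g i j := by
    ext i j
    simp
  obtain ⟨a, ha⟩ := hA k f g
  refine ⟨(∏ i, s (f i)) * a, ?_⟩
  rw [hsub, det_mul_column, ← ha, SignType.coe_mul]
  exact congrArg (· * _) (map_prod (SignType.castHom (α := R)) _ _)

theorem IsTotallyUnimodular.inv_apply [Fintype n] [DecidableEq n] {M : Matrix n n R}
    (hM : M.IsTotallyUnimodular) (hdet : IsUnit M.det) (i j : n) :
    M⁻¹ i j ∈ Set.range SignType.cast := by
  obtain ⟨s, hs⟩ : M.det ∈ Set.range SignType.cast := by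
    simpa using (isTotallyUnimodular_iff_fintype M).1 hM n id id
  obtain ⟨a, ha⟩ : M.adjugate i j ∈ Set.range SignType.cast := by
    rw [adjugate_apply]
    have hrow : M.updateRow j (Pi.single i 1) = (fromRows M (1 : Matrix n n R)).submatrix
        (fun k => if k = j then Sum.inr i else Sum.inl k) id := by
      ext k l
      by_cases hk : k = j
      · subst hk
        simp [one_apply, Pi.single_apply, eq_comm]
      · simp [hk]
    rw [hrow]
    exact (isTotallyUnimodular_iff_fintype _).1
      ((fromRows_one_isTotallyUnimodular_iff M).2 hM) n _ id
  have hss : 1 = (s : R) * s := by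
    cases s
    · simpa [← hs, eq_comm] using hdet
    all_goals simp
  have hinv : Ring.inverse (s : R) = s := by
    simpa using (Ring.inverse_mul_eq_iff_eq_mul (s : R) 1 s (hs ▸ hdet)).2 hss
  refine ⟨s * a, ?_⟩
  rw [inv_def, ← hs, hinv, smul_apply, ← ha, SignType.coe_mul, smul_eq_mul]

end TotallyUnimodular

theorem IsTotallyUnimodular.one_le_abs_mulVec_apply [Fintype n] {A : Matrix m n ℝ}
    (hA : A.IsTotallyUnimodular) (s : n → SignType) {i : m}
    (hi : (A *ᵥ fun j => (s j : ℝ)) i ≠ 0) :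
    1 ≤ |(A *ᵥ fun j => (s j : ℝ)) i| := by
  choose a ha using fun j => hA.apply i j
  have hint : (A *ᵥ fun j => (s j : ℝ)) i = ((∑ j, ((a j * s j : SignType) : ℤ) : ℤ) : ℝ) := by
    simp [mulVec, dotProduct, ← ha]
  rw [hint] at hi ⊢
  exact_mod_cast Int.one_le_abs (by exact_mod_cast hi)

end Matrix

namespace Matrix.IsTotallyUnimodular

variable [Fintype m] [Fintype n] {B : Matrix m n ℝ}

theorem exists_eq_smul_signType_of_ker (hB : B.IsTotallyUnimodular) {z : n → ℝ} {j₀ : n}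
    (hz : z j₀ ≠ 0)
    (hker : ∀ w, (∀ i, (B *ᵥ z) i = 0 → (B *ᵥ w) i = 0) → w j₀ = 0 → w = 0) :
    ∃ s : n → SignType, z = z j₀ • fun j => (s j : ℝ) := by
  classical
  -- the rows of `B` tight at `z` together with the unit row `j₀`
  let Rows := {r : m ⊕ n // Sum.elim (fun i => (B *ᵥ z) i = 0) (· = j₀) r}
  let C : Matrix Rows n ℝ := (fromRows B 1).submatrix Subtype.val id
  have hCw : ∀ w r, (C *ᵥ w) r = (fromRows B 1 *ᵥ w) r.1 := fun _ _ => rfl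
  have hCz : ∀ r : Rows, (C *ᵥ z) r = if r.1 = Sum.inr j₀ then z j₀ else 0 := by
    rintro ⟨i | j, hr⟩
    · simpa [hCw] using hr
    · obtain rfl : j = j₀ := hr
      simp [hCw]
  obtain ⟨f, hf⟩ := exists_submatrix_det_ne_zero (A := C) fun w hw =>
    hker w (fun i hi => by simpa [hCw] using congrFun hw ⟨.inl i, hi⟩)
      (by simpa [hCw] using congrFun hw ⟨.inr j₀, rfl⟩)
  set M := C.submatrix f id
  have hMTU : M.IsTotallyUnimodular :=
    ((fromRows_one_isTotallyUnimodular_iff B).2 hB).submatrix _ _ |>.submatrix f id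
  have hunit : IsUnit M.det := isUnit_iff_ne_zero.2 hf
  have hMz : ∀ k, (M *ᵥ z) k = if (f k).1 = Sum.inr j₀ then z j₀ else 0 := fun k => hCz (f k)
  obtain ⟨k₀, hk₀⟩ : ∃ k₀, (f k₀).1 = Sum.inr j₀ := by
    by_contra! h
    refine hz (congrFun (eq_zero_of_mulVec_eq_zero hf (funext fun k => ?_)) j₀)
    simp [hMz, h k]
  have hMz' : M *ᵥ z = Pi.single k₀ (z j₀) := by
    funext k
    rw [hMz, Pi.single_apply]
    by_cases hk : k = k₀
    · simp [hk, hk₀]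
    · have hne : (f k).1 ≠ Sum.inr j₀ := fun h => by
        have hfk : f k = f k₀ := Subtype.ext (h.trans hk₀.symm)
        exact hf (det_zero_of_row_eq hk (funext fun j => by simp [M, hfk]))
      simp [hk, hne]
  choose s hs using fun j => hMTU.inv_apply hunit j k₀
  refine ⟨s, ?_⟩
  calc z = M⁻¹ *ᵥ (M *ᵥ z) := by rw [mulVec_mulVec, nonsing_inv_mul M hunit, one_mulVec]
    _ = z j₀ • fun j => (s j : ℝ) := by
        ext j
        simp [hMz', mulVec_single, hs, mul_comm]

theorem exists_eq_pos_smul_signType_of_mem_extremePoints (hB : B.IsTotallyUnimodular)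
    {e z : n → ℝ} (hz : z ∈ {x | B *ᵥ x ≤ 0 ∧ e ⬝ᵥ x = 1}.extremePoints ℝ) :
    ∃ t : ℝ, 0 < t ∧ ∃ s : n → SignType, z = t • fun j => (s j : ℝ) := by
  obtain ⟨hzB, hze⟩ := hz.1
  obtain ⟨j₀, hj₀⟩ : ∃ j, z j ≠ 0 := by
    by_contra! h
    simp [show z = 0 from funext h] at hze
  have hker : ∀ w, (∀ i, (B *ᵥ z) i = 0 → (B *ᵥ w) i = 0) → w j₀ = 0 → w = 0 := by
    intro w hw hwj
    have hw' : w - (e ⬝ᵥ w) • z = 0 := by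
      refine eq_zero_of_mem_extremePoints_of_eventually hz ?_
      filter_upwards [eventually_mulVec_add_smul_le hzB (w := w - (e ⬝ᵥ w) • z)
        fun i hi => by simp [mulVec_sub, mulVec_smul, hi, hw i hi]] with s hs
      exact ⟨hs, by simp [dotProduct_add, dotProduct_sub, dotProduct_smul, hze]⟩
    have hwz : w = (e ⬝ᵥ w) • z := sub_eq_zero.1 hw'
    have hew : e ⬝ᵥ w = 0 := by
      simpa [hj₀, hwj, eq_comm (a := (0 : ℝ))] using congrFun hwz j₀
    rw [hwz, hew, zero_smul]
  obtain ⟨s, hs⟩ := hB.exists_eq_smul_signType_of_ker hj₀ hker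
  rcases hj₀.lt_or_gt with hneg | hpos
  · exact ⟨-z j₀, neg_pos.2 hneg, -s, by ext j; rw [congrFun hs j]; simp⟩
  · exact ⟨z j₀, hpos, s, hs⟩

theorem convexHull_extremePoints_slice (hB : B.IsTotallyUnimodular) {e : n → ℝ}
    (hbdd : Bornology.IsBounded {x | B *ᵥ x ≤ 0 ∧ e ⬝ᵥ x = 1}) :
    convexHull ℝ ({x | B *ᵥ x ≤ 0 ∧ e ⬝ᵥ x = 1}.extremePoints ℝ) =
      {x | B *ᵥ x ≤ 0 ∧ e ⬝ᵥ x = 1} := by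
  set P := {x | B *ᵥ x ≤ 0 ∧ e ⬝ᵥ x = 1}
  have hconv : Convex ℝ P := by
    intro x hx y hy a b ha hb hab
    refine ⟨?_, by simp [dotProduct_add, dotProduct_smul, hx.2, hy.2, hab]⟩
    rw [mulVec_add, mulVec_smul, mulVec_smul]
    exact add_nonpos (smul_nonpos_of_nonneg_of_nonpos ha hx.1)
      (smul_nonpos_of_nonneg_of_nonpos hb hy.1)
  have hcpt : IsCompact P := by
    refine Metric.isCompact_of_isClosed_isBounded ?_ hbdd
    exact (isClosed_le (f := (B *ᵥ ·)) (by fun_prop) continuous_const).inter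
      (isClosed_eq (f := (e ⬝ᵥ ·)) (by fun_prop) continuous_const)
  refine convexHull_extremePoints_eq hcpt hconv <| (Set.finite_range fun s : n → SignType =>
    (e ⬝ᵥ fun j => (s j : ℝ))⁻¹ • fun j => (s j : ℝ)).subset fun z hz => ?_
  obtain ⟨t, -, s, rfl⟩ := hB.exists_eq_pos_smul_signType_of_mem_extremePoints hz
  have hte : t * (e ⬝ᵥ fun j => (s j : ℝ)) = 1 := by
    simpa [dotProduct_smul] using (extremePoints_subset hz).2
  exact ⟨s, by dsimp only; rw [← eq_inv_of_mul_eq_one_left hte]⟩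

theorem exists_sum_signType_of_isBounded (hB : B.IsTotallyUnimodular) {e : n → ℝ}
    (hbdd : Bornology.IsBounded {x | B *ᵥ x ≤ 0 ∧ e ⬝ᵥ x = 1}) {u : n → ℝ} (hu : B *ᵥ u ≤ 0)
    (heu : 0 < e ⬝ᵥ u) :
    ∃ r ≤ Fintype.card n, ∃ (l : Fin r → ℝ) (s : Fin r → n → SignType), (∀ k, 0 ≤ l k) ∧
      (∀ k, B *ᵥ (fun j => (s k j : ℝ)) ≤ 0) ∧ ∑ k, l k • (fun j => (s k j : ℝ)) = u := by
  set P := {x | B *ᵥ x ≤ 0 ∧ e ⬝ᵥ x = 1}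
  have huP : (e ⬝ᵥ u)⁻¹ • u ∈ convexHull ℝ (P.extremePoints ℝ) := by
    rw [hB.convexHull_extremePoints_slice hbdd]
    refine ⟨?_, by simp [dotProduct_smul, heu.ne']⟩
    rw [mulVec_smul]
    exact smul_nonpos_of_nonneg_of_nonpos (inv_nonneg.2 heu.le) hu
  obtain ⟨ι, _, z, w, hzE, hai, hw, -, hwz⟩ := eq_pos_convex_span_of_mem_convexHull huP
  have hzP : ∀ k, z k ∈ P := fun k => extremePoints_subset (hzE ⟨k, rfl⟩)
  choose t ht s hs using fun k =>
    hB.exists_eq_pos_smul_signType_of_mem_extremePoints (hzE ⟨k, rfl⟩)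
  have hcard : Fintype.card ι ≤ Fintype.card n := by
    simpa using (hai.linearIndependent_of_forall_eq_one (dotProductBilin ℝ ℝ e)
      fun k => (hzP k).2).fintype_card_le_finrank
  let φ := Fintype.equivFin ι
  refine ⟨_, hcard, fun k => (e ⬝ᵥ u) * w (φ.symm k) * t (φ.symm k), fun k => s (φ.symm k),
    fun k => ?_, fun k => ?_, ?_⟩
  · have := hw (φ.symm k)
    have := ht (φ.symm k)
    positivity
  · have hzk := (hzP (φ.symm k)).1
    rw [hs, mulVec_smul] at hzk
    intro i
    exact nonpos_of_mul_nonpos_right (hzk i) (ht _)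
  · calc ∑ k, ((e ⬝ᵥ u) * w (φ.symm k) * t (φ.symm k)) • (fun j => (s (φ.symm k) j : ℝ))
        = (e ⬝ᵥ u) • ∑ k, w k • z k := by
          rw [← φ.symm.sum_comp (fun k => w k • z k)]
          simp only [Finset.smul_sum, hs, smul_smul, mul_assoc]
      _ = u := by rw [hwz, smul_inv_smul₀ heu.ne']

theorem exists_sum_signType_eq (hB : B.IsTotallyUnimodular) {u : n → ℝ} (hu : B *ᵥ u ≤ 0) :
    ∃ r ≤ Fintype.card n, ∃ (l : Fin r → ℝ) (s : Fin r → n → SignType), (∀ k, 0 ≤ l k) ∧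
      (∀ k, B *ᵥ (fun j => (s k j : ℝ)) ≤ 0) ∧ ∑ k, l k • (fun j => (s k j : ℝ)) = u := by
  classical
  by_cases hu0 : u = 0
  · exact ⟨0, Nat.zero_le _, Fin.elim0, Fin.elim0, (·.elim0), (·.elim0), by simp [hu0]⟩
  -- confine the cone to the orthant of `u`, where `σ ⬝ᵥ x` is the `ℓ¹` norm of `x`
  let σ : n → SignType := fun j => if 0 ≤ u j then 1 else -1
  let Bσ : Matrix (m ⊕ n) n ℝ := fromRows B (of fun j => Pi.single j ((-σ j : SignType) : ℝ))
  have hBσ : Bσ.IsTotallyUnimodular := hB.fromRows_unitlike fun _ j => ⟨j, -σ j, rfl⟩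
  have hBσx : ∀ x : n → ℝ, Bσ *ᵥ x ≤ 0 ↔ B *ᵥ x ≤ 0 ∧ ∀ j, 0 ≤ σ j * x j := by
    intro x
    simp only [Bσ, fromRows_mulVec, Pi.le_def, Sum.forall, Sum.elim_inl, Sum.elim_inr,
      Pi.zero_apply]
    simp [mulVec, dotProduct, Pi.single_apply]
  have hσabs : ∀ x : n → ℝ, (∀ j, 0 ≤ σ j * x j) → ∀ j, σ j * x j = |x j| := by
    intro x hx j
    have := hx j
    by_cases h : 0 ≤ u j
    · simp only [σ, if_pos h, SignType.coe_one, one_mul] at this ⊢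
      exact (abs_of_nonneg this).symm
    · simp only [σ, if_neg h, SignType.coe_neg, SignType.coe_one, neg_one_mul] at this ⊢
      exact (abs_of_nonpos (neg_nonneg.1 this)).symm
  have hbdd : Bornology.IsBounded {x | Bσ *ᵥ x ≤ 0 ∧ (fun j => (σ j : ℝ)) ⬝ᵥ x = 1} := by
    refine (Metric.isBounded_closedBall (x := 0) (r := 1)).subset ?_
    rintro x ⟨hx, hσx⟩
    have hx' := ((hBσx x).1 hx).2
    rw [mem_closedBall_zero_iff, pi_norm_le_iff_of_nonneg zero_le_one]
    intro j
    rw [Real.norm_eq_abs, ← hσabs x hx' j, ← hσx]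
    exact Finset.single_le_sum (fun j _ => hx' j) (Finset.mem_univ j)
  have hBσu : Bσ *ᵥ u ≤ 0 := by
    refine (hBσx u).2 ⟨hu, fun j => ?_⟩
    by_cases h : 0 ≤ u j
    · simp [σ, h]
    · simp [σ, h]
      linarith
  have hσu : 0 < (fun j => (σ j : ℝ)) ⬝ᵥ u := by
    simp only [dotProduct, hσabs u ((hBσx u).1 hBσu).2]
    obtain ⟨j, hj⟩ := Function.ne_iff.1 hu0
    exact Finset.sum_pos' (fun j _ => abs_nonneg _) ⟨j, Finset.mem_univ _, abs_pos.2 hj⟩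
  obtain ⟨r, hr, l, s, hl, hs, hsum⟩ := hBσ.exists_sum_signType_of_isBounded hbdd hBσu hσu
  exact ⟨r, hr, l, s, hl, fun k => ((hBσx _).1 (hs k)).1, hsum⟩

theorem exists_sum_signType_eq_of_rowwise_sign (hB : B.IsTotallyUnimodular) (u : n → ℝ) :
    ∃ r ≤ Fintype.card n, ∃ (l : Fin r → ℝ) (s : Fin r → n → SignType), (∀ k, 0 ≤ l k) ∧
      (∀ i, (∀ k, 0 ≤ (B *ᵥ fun j => (s k j : ℝ)) i) ∨ ∀ k, (B *ᵥ fun j => (s k j : ℝ)) i ≤ 0) ∧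
      ∑ k, l k • (fun j => (s k j : ℝ)) = u := by
  classical
  -- flip the rows of `B` so that `u` lies in the cone `{z | Bσ z ≤ 0}`
  let σ : m → SignType := fun i => if 0 ≤ (B *ᵥ u) i then -1 else 1
  have hBσ : ∀ z i, (((diagonal fun i => (σ i : ℝ)) * B) *ᵥ z) i = σ i * (B *ᵥ z) i :=
    fun z i => by simp [← mulVec_mulVec, mulVec_diagonal]
  obtain ⟨r, hr, l, s, hl, hcone, hu⟩ := (hB.diagonal_mul σ).exists_sum_signType_eq
    (u := u) fun i => by
      rw [hBσ]
      by_cases h : 0 ≤ (B *ᵥ u) i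
      · simp [σ, h]
      · simp [σ, h]
        linarith
  refine ⟨r, hr, l, s, hl, fun i => ?_, hu⟩
  have hσs := fun k => hBσ _ i ▸ hcone k i
  by_cases h : 0 ≤ (B *ᵥ u) i
  · exact .inl fun k => by simpa [σ, h] using hσs k
  · exact .inr fun k => by simpa [σ, h] using hσs k

end Matrix.IsTotallyUnimodular

-- One row of the truncation step: `X`, `Y` are the row values at `x''`, `x₀` and `a k` at `dₖ`.
theorem sub_sum_min_mul_le {ι : Type*} [Fintype ι] {a l : ι → ℝ} {ε X Y β γ : ℝ} (hε : 0 ≤ ε)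
    (hl : ∀ k, 0 ≤ l k) (hsign : (∀ k, 0 ≤ a k) ∨ ∀ k, a k ≤ 0)
    (hint : ∀ k, a k ≠ 0 → 1 ≤ |a k|) (hXY : X - Y = ∑ k, l k * a k) (hX : X ≤ β) (hY : Y ≤ γ)
    (hβγ : β - ε ≤ γ) :
    X - ∑ k, min (l k) ε * a k ≤ γ := by
  rcases hsign with hpos | hneg
  · by_cases hbig : ∃ k, ε ≤ l k ∧ a k ≠ 0
    · obtain ⟨k, hk, hak⟩ := hbig
      have ha1 : 1 ≤ a k := by simpa [abs_of_nonneg (hpos k)] using hint k hak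
      have : ε ≤ ∑ k, min (l k) ε * a k := calc
        ε ≤ min (l k) ε * a k := by rw [min_eq_right hk]; nlinarith
        _ ≤ ∑ k, min (l k) ε * a k :=
          Finset.single_le_sum (fun k _ => mul_nonneg (le_min (hl k) hε) (hpos k))
            (Finset.mem_univ k)
      linarith
    · push Not at hbig
      have : ∑ k, min (l k) ε * a k = ∑ k, l k * a k := Finset.sum_congr rfl fun k _ => by
        rcases lt_or_ge (l k) ε with h | h
        · rw [min_eq_left h.le]
        · simp [hbig k h]
      linarith
  · have : ∑ k, l k * a k ≤ ∑ k, min (l k) ε * a k :=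
      Finset.sum_le_sum fun k _ => mul_le_mul_of_nonpos_right (min_le_left _ _) (hneg k)
    linarith

theorem norm_sum_min_smul_signType_le [Fintype n] {ι : Type*} [Fintype ι] {l : ι → ℝ}
    (hl : ∀ k, 0 ≤ l k) {ε : ℝ} (hε : 0 ≤ ε) (s : ι → n → SignType) :
    ‖∑ k, min (l k) ε • (fun j => (s k j : ℝ))‖ ≤ Fintype.card ι * ε := by
  have hs : ∀ k, ‖fun j => (s k j : ℝ)‖ ≤ 1 := fun k =>
    (pi_norm_le_iff_of_nonneg zero_le_one).2 fun j => by
      rw [Real.norm_eq_abs]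
      generalize s k j = t
      cases t <;> simp
  calc ‖∑ k, min (l k) ε • (fun j => (s k j : ℝ))‖
      ≤ ∑ k, ‖min (l k) ε • (fun j => (s k j : ℝ))‖ := norm_sum_le _ _
    _ ≤ ∑ _k : ι, ε := Finset.sum_le_sum fun k _ => by
        rw [norm_smul, Real.norm_of_nonneg (le_min (hl k) hε)]
        exact (mul_le_of_le_one_right (le_min (hl k) hε) (hs k)).trans (min_le_right _ _)
    _ = Fintype.card ι * ε := by simp

theorem Matrix.IsTotallyUnimodular.exists_near_of_forall_dotProduct_le [Fintype m] [Fintype n]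
    {A : Matrix m n ℝ} (hA : A.IsTotallyUnimodular) (c : n → ℝ)
    {b₁ b₂ : m → ℝ} {x₁ x₀ : n → ℝ} (hx₁ : A *ᵥ x₁ ≤ b₁)
    (hopt : ∀ y, A *ᵥ y ≤ b₁ → c ⬝ᵥ y ≤ c ⬝ᵥ x₁) (hx₀ : A *ᵥ x₀ ≤ b₂) :
    ∃ x, A *ᵥ x ≤ b₂ ∧ c ⬝ᵥ x₀ ≤ c ⬝ᵥ x ∧ ‖x₁ - x‖ ≤ Fintype.card n * ‖b₁ - b₂‖ := by
  set ε := ‖b₁ - b₂‖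
  have hε : ∀ i, |b₁ i - b₂ i| ≤ ε := fun i => norm_le_pi_norm (b₁ - b₂) i
  obtain ⟨r, hr, l, s, hl, hsign, hu⟩ := hA.exists_sum_signType_eq_of_rowwise_sign (x₁ - x₀)
  set a : Fin r → m → ℝ := fun k => A *ᵥ fun j => (s k j : ℝ)
  have hAsum : ∀ (g : Fin r → ℝ) i,
      (A *ᵥ ∑ k, g k • fun j => (s k j : ℝ)) i = ∑ k, g k * a k i := by
    intro g i
    simp [a, mulVec_sum, mulVec_smul, Finset.sum_apply]
  have hint : ∀ i k, a k i ≠ 0 → 1 ≤ |a k i| := fun i k => hA.one_le_abs_mulVec_apply (s k)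
  have hrow : ∀ i, (A *ᵥ x₁) i - (A *ᵥ x₀) i = ∑ k, l k * a k i := fun i => by
    rw [← hAsum, hu, mulVec_sub, Pi.sub_apply]
  set w := ∑ k, min (l k) ε • fun j => (s k j : ℝ)
  have hy : A *ᵥ (x₀ + w) ≤ b₁ := by
    intro i
    have := sub_sum_min_mul_le (a := fun k => -a k i) (norm_nonneg _) hl
      ((hsign i).symm.imp (fun h k => neg_nonneg.2 (h k)) (fun h k => neg_nonpos.2 (h k)))
      (by simpa using hint i) (by simp [Finset.sum_neg_distrib]; linarith [hrow i]) (hx₀ i)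
      (hx₁ i) (by linarith [(abs_le.1 (hε i)).1])
    simpa [mulVec_add, hAsum, w] using this
  refine ⟨x₁ - w, fun i => ?_, ?_, ?_⟩
  · have := sub_sum_min_mul_le (norm_nonneg _) hl (hsign i) (hint i) (hrow i) (hx₁ i) (hx₀ i)
      (by linarith [(abs_le.1 (hε i)).2])
    simpa [mulVec_sub, hAsum, w] using this
  · have := hopt _ hy
    simp only [dotProduct_add, dotProduct_sub] at this ⊢
    linarith
  · calc ‖x₁ - (x₁ - w)‖ = ‖w‖ := by rw [sub_sub_cancel]
      _ ≤ r * ε := by simpa using norm_sum_min_smul_signType_le hl (norm_nonneg _) s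
      _ ≤ Fintype.card n * ε := by gcongr

theorem normInf_eq_norm {ι : Type*} [Fintype ι] (x : ι → ℝ) : normInf x = ‖x‖ :=
  le_antisymm (Real.iSup_le (fun i => norm_le_pi_norm x i) (norm_nonneg x))
    ((pi_norm_le_iff_of_nonneg (Real.iSup_nonneg fun i => abs_nonneg (x i))).2 fun i =>
      le_ciSup (f := fun i => |x i|) (Set.finite_range _).bddAbove i)

theorem stmt11_general {p n : ℕ} (Atil : Matrix (Fin p) (Fin n) ℝ)
    (hTU : Atil.IsTotallyUnimodular)
    (c : Fin n → ℝ) (b'' bstar : Fin p → ℝ)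
    (hfeasStar : ∃ x : Fin n → ℝ, ∀ i, Atil.mulVec x i ≤ bstar i) :
    ∀ x'' : Fin n → ℝ, (∀ i, Atil.mulVec x'' i ≤ b'' i) →
      (∀ y : Fin n → ℝ, (∀ i, Atil.mulVec y i ≤ b'' i) → c ⬝ᵥ y ≤ c ⬝ᵥ x'') →
      ∃ xstar : Fin n → ℝ,
        (∀ i, Atil.mulVec xstar i ≤ bstar i) ∧
        (∀ y : Fin n → ℝ, (∀ i, Atil.mulVec y i ≤ bstar i) → c ⬝ᵥ y ≤ c ⬝ᵥ xstar) ∧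
        normInf (x'' - xstar) ≤ n * normInf (b'' - bstar) := by
  intro x'' hx'' hopt
  have hnear : ∀ x₀, Atil *ᵥ x₀ ≤ bstar → ∃ x, Atil *ᵥ x ≤ bstar ∧ c ⬝ᵥ x₀ ≤ c ⬝ᵥ x ∧
      x ∈ Metric.closedBall x'' (n * ‖b'' - bstar‖) := fun x₀ hx₀ => by
    simpa [dist_eq_norm'] using hTU.exists_near_of_forall_dotProduct_le c hx'' hopt hx₀
  let K := {x | Atil *ᵥ x ≤ bstar} ∩ Metric.closedBall x'' (n * ‖b'' - bstar‖)
  have hK : IsCompact K := (isCompact_closedBall _ _).inter_left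
    (isClosed_le (f := (Atil *ᵥ ·)) (by fun_prop) continuous_const)
  obtain ⟨x₀, hx₀⟩ := hfeasStar
  obtain ⟨x₁, hx₁, -, hx₁K⟩ := hnear x₀ hx₀
  obtain ⟨xstar, ⟨hxstar, hxstarK⟩, hmax⟩ :=
    hK.exists_isMaxOn ⟨x₁, hx₁, hx₁K⟩ (continuous_const.dotProduct continuous_id).continuousOn
  refine ⟨xstar, hxstar, fun y hy => ?_, ?_⟩
  · obtain ⟨x, hx, hcx, hxK⟩ := hnear y hy
    exact hcx.trans (hmax ⟨hx, hxK⟩)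
  · rwa [normInf_eq_norm, normInf_eq_norm, ← dist_eq_norm']

/-- Sensitivity theorem (Schrijver 10.5, totally unimodular case): if `Ã` is a
totally unimodular `p × n` matrix and both programs `max{cᵀx : Ãx ≤ b''}` and
`max{cᵀx : Ãx ≤ b*}` are finite (feasible and bounded above), then for each
optimal solution `x''` of the first there exists an optimal solution `x*` of the
second with `‖x'' − x*‖∞ ≤ n ‖b'' − b*‖∞`. -/
theorem stmt11 {p n : ℕ} (Atil : Matrix (Fin p) (Fin n) ℝ)
    (hTU : Atil.IsTotallyUnimodular)
    (c : Fin n → ℝ) (b'' bstar : Fin p → ℝ)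
    (hfeas'' : ∃ x : Fin n → ℝ, ∀ i, Atil.mulVec x i ≤ b'' i)
    (hbdd'' : ∃ M : ℝ, ∀ x : Fin n → ℝ, (∀ i, Atil.mulVec x i ≤ b'' i) → c ⬝ᵥ x ≤ M)
    (hfeasStar : ∃ x : Fin n → ℝ, ∀ i, Atil.mulVec x i ≤ bstar i)
    (hbddStar : ∃ M : ℝ, ∀ x : Fin n → ℝ, (∀ i, Atil.mulVec x i ≤ bstar i) → c ⬝ᵥ x ≤ M) :
    ∀ x'' : Fin n → ℝ, (∀ i, Atil.mulVec x'' i ≤ b'' i) →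
      (∀ y : Fin n → ℝ, (∀ i, Atil.mulVec y i ≤ b'' i) → c ⬝ᵥ y ≤ c ⬝ᵥ x'') →
      ∃ xstar : Fin n → ℝ,
        (∀ i, Atil.mulVec xstar i ≤ bstar i) ∧
        (∀ y : Fin n → ℝ, (∀ i, Atil.mulVec y i ≤ bstar i) → c ⬝ᵥ y ≤ c ⬝ᵥ xstar) ∧
        normInf (x'' - xstar) ≤ n * normInf (b'' - bstar) :=
  stmt11_general Atil hTU c b'' bstar hfeasStar
end
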